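/- arXiv:2109.12705 — 2 statements merged into one kernel-verified Lean document; each statement's English description precedes it below -/
import Mathlib

section
/- For every integer n ≥ 1, B(n) = (-1)^{n} + 2·Σ_{k=0}^{⌊n/2⌋} (2k+1)!·S(n,2k+1). -/
/-!
The recurrence `S(n+1,k+1) = (k+1) S(n,k+1) + S(n,k)` makes the alternating sum
`∑ (-1)^k k! S(n,k)` telescope to `(-1)^n`. Subtracting it from `B(n) = ∑ k! S(n,k)` leaves
`∑ (1 - (-1)^k) k! S(n,k)`, in which only the odd `k` survive, each with weight `2`.
-/

open Finset

/-- Stirling numbers of the second kind. -/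
def S : ℕ → ℕ → ℕ
  | 0, 0 => 1
  | 0, _ + 1 => 0
  | _ + 1, 0 => 0
  | n + 1, k + 1 => (k + 1) * S n (k + 1) + S n k

/-- Ordered Bell (Fubini) numbers. -/
def B (n : ℕ) : ℕ := ∑ k ∈ range (n + 1), k.factorial * S n k

open Nat

theorem S_eq_stirlingSecond : ∀ n k : ℕ, S n k = stirlingSecond n k
  | 0, 0 | 0, _ + 1 | _ + 1, 0 => rfl
  | n + 1, k + 1 => by
    rw [S, stirlingSecond_succ_succ, S_eq_stirlingSecond n (k + 1), S_eq_stirlingSecond n k]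

theorem Finset.sum_range_two_mul_one_sub_neg_one_pow_mul {R : Type*} [CommRing R]
    (a : ℕ → R) (m : ℕ) :
    ∑ k ∈ range (2 * m), (1 - (-1) ^ k) * a k = 2 * ∑ j ∈ range m, a (2 * j + 1) := by
  induction m with
  | zero => simp
  | succ m ih =>
    rw [mul_add_one, sum_range_succ, sum_range_succ, sum_range_succ, ih,
      pow_succ, pow_mul]
    norm_num
    ring

namespace Nat

theorem sum_range_mul_stirlingSecond_of_lt {R : Type*} [Semiring R] (f : ℕ → R) {n N : ℕ}
    (h : n < N) :
    ∑ k ∈ range N, f k * stirlingSecond n k = ∑ k ∈ range (n + 1), f k * stirlingSecond n k := by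
  refine (sum_subset (range_subset_range.mpr h) fun k _ hk => ?_).symm
  rw [stirlingSecond_eq_zero_of_lt (by simpa using hk), cast_zero, mul_zero]

theorem sum_range_neg_one_pow_mul_factorial_mul_stirlingSecond (n : ℕ) :
    ∑ k ∈ range (n + 1), (-1 : ℤ) ^ k * k ! * stirlingSecond n k = (-1) ^ n := by
  induction n with
  | zero => simp
  | succ n ih =>
    -- `(-1)^(k+1) (k+1)! S(n,k) = -(k+1) (-1)^k k! S(n,k)` splits as `-g k - (-1)^k k! S(n,k)`
    let g : ℕ → ℤ := fun k => (-1) ^ k * k ! * k * stirlingSecond n k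
    have step : ∀ k, (-1 : ℤ) ^ (k + 1) * (k + 1)! * stirlingSecond (n + 1) (k + 1) =
        g (k + 1) - g k - (-1) ^ k * k ! * stirlingSecond n k := by
      intro k
      simp only [g, stirlingSecond_succ_succ, factorial_succ]
      push_cast
      ring
    rw [sum_range_succ', sum_congr rfl fun k _ => step k, sum_sub_distrib, sum_range_sub, ih]
    simp [g, stirlingSecond_eq_zero_of_lt (lt_add_one n), pow_succ]

end Nat

theorem stmt4_general (n : ℕ) :
    (B n : ℤ) = (-1) ^ n +
      2 * ∑ k ∈ range (n / 2 + 1), ((2 * k + 1).factorial * S n (2 * k + 1) : ℤ) := by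
  have hn : n < 2 * (n / 2 + 1) := by omega
  have hB : (B n : ℤ) = ∑ k ∈ range (2 * (n / 2 + 1)), (k ! : ℤ) * stirlingSecond n k := by
    rw [sum_range_mul_stirlingSecond_of_lt _ hn, B]
    push_cast
    simp only [S_eq_stirlingSecond]
  have halt :
      ∑ k ∈ range (2 * (n / 2 + 1)), (-1 : ℤ) ^ k * k ! * stirlingSecond n k = (-1) ^ n := by
    rw [sum_range_mul_stirlingSecond_of_lt _ hn,
      sum_range_neg_one_pow_mul_factorial_mul_stirlingSecond]
  have hodd := sum_range_two_mul_one_sub_neg_one_pow_mul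
    (fun k => (k ! : ℤ) * stirlingSecond n k) (n / 2 + 1)
  simp only [sub_mul, one_mul, sum_sub_distrib, ← mul_assoc, ← hB, halt] at hodd
  simp only [S_eq_stirlingSecond]
  linarith

theorem stmt4 (n : ℕ) (hn : 1 ≤ n) :
    (B n : ℤ) = (-1) ^ n +
      2 * ∑ k ∈ range (n / 2 + 1), ((2 * k + 1).factorial * S n (2 * k + 1) : ℤ) :=
  stmt4_general n
end

section
/- For every integer n ≥ 1, B(n) = Σ_{k=0}^{⌊(n+1)/2⌋} (2k)!·S(n+1,2k+1). -/
open Finset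

/-!
Write `a k = k! · S(n,k)`, so that `B(n) = Σ_k a k`. Multiplying the recurrence
`S(n+1,k+1) = (k+1) S(n,k+1) + S(n,k)` by `k!` gives `k! · S(n+1,k+1) = a k + a (k+1)`.
For even `k = 2j` the right-hand side runs over the pair `{2j, 2j+1}`, and these pairs
partition the indices `0, …, n` on which `a` is supported.
-/

theorem S_eq_zero_of_lt {n k : ℕ} (h : n < k) : S n k = 0 := by
  induction n generalizing k with
  | zero => obtain ⟨k, rfl⟩ := Nat.exists_eq_succ_of_ne_zero (by omega : k ≠ 0); rfl
  | succ n ih =>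
    obtain ⟨k, rfl⟩ := Nat.exists_eq_succ_of_ne_zero (by omega : k ≠ 0)
    simp only [S, ih (by omega : n < k + 1), ih (by omega : n < k), mul_zero, add_zero]

theorem factorial_mul_S_succ_succ (n k : ℕ) :
    k.factorial * S (n + 1) (k + 1) = k.factorial * S n k + (k + 1).factorial * S n (k + 1) := by
  rw [S, Nat.factorial_succ]
  ring

theorem B_eq_sum_range {n N : ℕ} (hN : n < N) :
    B n = ∑ k ∈ range N, k.factorial * S n k := by
  refine sum_subset (range_subset_range.2 hN) fun k _ hk => ?_
  rw [S_eq_zero_of_lt (by simpa using hk), mul_zero]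

theorem Finset.sum_range_two_mul {M : Type*} [AddCommMonoid M] (f : ℕ → M) (m : ℕ) :
    ∑ i ∈ range (2 * m), f i = ∑ j ∈ range m, (f (2 * j) + f (2 * j + 1)) := by
  induction m with
  | zero => simp
  | succ m ih => rw [Nat.mul_succ, sum_range_succ, sum_range_succ, ih, sum_range_succ, add_assoc]

theorem stmt6_general (n : ℕ) :
    B n = ∑ k ∈ range ((n + 1) / 2 + 1), (2 * k).factorial * S (n + 1) (2 * k + 1) := by
  simp only [factorial_mul_S_succ_succ]
  rw [← sum_range_two_mul (fun k => k.factorial * S n k)]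
  exact B_eq_sum_range (by omega)

theorem stmt6 (n : ℕ) (hn : 1 ≤ n) :
    B n = ∑ k ∈ range ((n + 1) / 2 + 1), (2 * k).factorial * S (n + 1) (2 * k + 1) :=
  stmt6_general n
end
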